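/- Let N be a positive integer and let λ, b, c, t_φ, n_φ, q be integers satisfying c·λ + b ≡ q + 1 (mod N) and λ² - t_φ·λ + n_φ ≡ 0 (mod N). Set b₁ := (q+1-b, -c) and b₂ := (c·n_φ - (q+1-b)·t_φ, q+1-b), and let L := {(z₁, z₂) ∈ ℤ² : z₁ + z₂·λ ≡ 0 (mod N)}. Then: (i) b₁ ∈ L and b₂ ∈ L; (ii) the determinant of the matrix with rows b₁, b₂ equals (q+1-b)² + c²·n_φ - (q+1-b)·c·t_φ, and this quantity equals (q+1)² - (c·t_φ + 2b)·(q+1) + (c²·n_φ + b·c·t_φ + b²); (iii) if N = (q+1-b)² + c²·n_φ - (q+1-b)·c·t_φ, then L equals the ℤ-span of {b₁, b₂}. -/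

import Mathlib

/-- The lattice L = {(z₁, z₂) ∈ ℤ² : z₁ + z₂·λ ≡ 0 (mod N)} of
2-dimensional decompositions of 0. -/
def decompLattice2 (N : ℕ) (lam : ℤ) : Submodule ℤ (Fin 2 → ℤ) where
  carrier := {z | ((z 0 + z 1 * lam : ℤ) : ZMod N) = 0}
  zero_mem' := by simp
  add_mem' := by
    intro a b ha hb
    simp only [Set.mem_setOf_eq, Pi.add_apply] at ha hb ⊢
    push_cast at ha hb ⊢
    linear_combination ha + hb
  smul_mem' := by
    intro m a ha
    simp only [Set.mem_setOf_eq, Pi.smul_apply, smul_eq_mul] at ha ⊢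
    push_cast at ha ⊢
    linear_combination (m : ZMod N) * ha

/-!
Both vectors lie in `L` because `q + 1 - b ≡ c·λ` and `λ² ≡ t_φ·λ - n_φ` modulo `N`.
For the spanning statement only the determinant matters: modulo `N` every vector of `L` is a
multiple of `(-λ, 1)`, so any two vectors of `L` have a `2 × 2` minor divisible by `N`.
Hence if `v, w ∈ L` have minor exactly `N`, Cramer's rule writes every `z ∈ L` as an integral
combination of `v` and `w`.
-/

theorem mem_decompLattice2_iff {N : ℕ} {lam : ℤ} {z : Fin 2 → ℤ} :
    z ∈ decompLattice2 N lam ↔ (z 0 : ZMod N) + z 1 * lam = 0 := by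
  change ((z 0 + z 1 * lam : ℤ) : ZMod N) = 0 ↔ _
  push_cast
  rfl

theorem intCast_dvd_minor_of_mem_decompLattice2 {N : ℕ} {lam : ℤ} {z w : Fin 2 → ℤ}
    (hz : z ∈ decompLattice2 N lam) (hw : w ∈ decompLattice2 N lam) :
    (N : ℤ) ∣ z 0 * w 1 - z 1 * w 0 := by
  rw [mem_decompLattice2_iff] at hz hw
  rw [← ZMod.intCast_zmod_eq_zero_iff_dvd]
  push_cast
  linear_combination (w 1 : ZMod N) * hz - (z 1 : ZMod N) * hw

theorem span_pair_eq_decompLattice2 {N : ℕ} (hN : N ≠ 0) {lam : ℤ} {v w : Fin 2 → ℤ}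
    (hv : v ∈ decompLattice2 N lam) (hw : w ∈ decompLattice2 N lam)
    (hdet : v 0 * w 1 - v 1 * w 0 = N) :
    Submodule.span ℤ {v, w} = decompLattice2 N lam := by
  refine le_antisymm (Submodule.span_le.mpr (Set.pair_subset hv hw)) fun z hz => ?_
  obtain ⟨k₁, hk₁⟩ := intCast_dvd_minor_of_mem_decompLattice2 hz hw
  obtain ⟨k₂, hk₂⟩ := intCast_dvd_minor_of_mem_decompLattice2 hv hz
  have hN' : (N : ℤ) ≠ 0 := by exact_mod_cast hN
  have hz_eq : z = k₁ • v + k₂ • w := by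
    refine funext (Fin.forall_fin_two.mpr ⟨?_, ?_⟩) <;>
      simp only [Pi.add_apply, Pi.smul_apply, smul_eq_mul] <;> apply mul_left_cancel₀ hN'
    · linear_combination -(z 0) * hdet + v 0 * hk₁ + w 0 * hk₂
    · linear_combination -(z 1) * hdet + v 1 * hk₁ + w 1 * hk₂
  rw [hz_eq]
  exact add_mem (Submodule.smul_mem _ _ (Submodule.subset_span (Set.mem_insert v {w})))
    (Submodule.smul_mem _ _ (Submodule.subset_span (Set.mem_insert_of_mem v rfl)))

/-- Genus 2 real multiplication basis: if c·λ + b ≡ q + 1 and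
λ² - t_φ·λ + n_φ ≡ 0 (mod N), then b₁ = (q+1-b, -c) and
b₂ = (c·n_φ - (q+1-b)·t_φ, q+1-b) lie in L; the matrix with rows b₁, b₂ has
determinant (q+1-b)² + c²·n_φ - (q+1-b)·c·t_φ, which equals
(q+1)² - (c·t_φ + 2b)·(q+1) + (c²·n_φ + b·c·t_φ + b²); and if N equals this
quantity then b₁, b₂ span L. -/
theorem genus2_rm_basis
    (N : ℕ) (hN : 0 < N) (lam b c tφ nφ q : ℤ)
    (heig : ((c * lam + b : ℤ) : ZMod N) = ((q + 1 : ℤ) : ZMod N))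
    (hmin : ((lam ^ 2 - tφ * lam + nφ : ℤ) : ZMod N) = 0) :
    (![q + 1 - b, -c] ∈ decompLattice2 N lam ∧
      ![c * nφ - (q + 1 - b) * tφ, q + 1 - b] ∈ decompLattice2 N lam) ∧
    ((!![q + 1 - b, -c; c * nφ - (q + 1 - b) * tφ, q + 1 - b]
          : Matrix (Fin 2) (Fin 2) ℤ).det
        = (q + 1 - b) ^ 2 + c ^ 2 * nφ - (q + 1 - b) * c * tφ ∧
      (q + 1 - b) ^ 2 + c ^ 2 * nφ - (q + 1 - b) * c * tφ
        = (q + 1) ^ 2 - (c * tφ + 2 * b) * (q + 1)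
            + (c ^ 2 * nφ + b * c * tφ + b ^ 2)) ∧
    ((N : ℤ) = (q + 1 - b) ^ 2 + c ^ 2 * nφ - (q + 1 - b) * c * tφ →
      Submodule.span ℤ
          ({![q + 1 - b, -c],
            ![c * nφ - (q + 1 - b) * tφ, q + 1 - b]} : Set (Fin 2 → ℤ))
        = decompLattice2 N lam) := by
  push_cast at heig hmin
  have hb₁ : ![q + 1 - b, -c] ∈ decompLattice2 N lam := by
    rw [mem_decompLattice2_iff]
    simp only [Matrix.cons_val_zero, Matrix.cons_val_one]
    push_cast
    linear_combination -heig
  have hb₂ : ![c * nφ - (q + 1 - b) * tφ, q + 1 - b] ∈ decompLattice2 N lam := by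
    rw [mem_decompLattice2_iff]
    simp only [Matrix.cons_val_zero, Matrix.cons_val_one]
    push_cast
    linear_combination ((tφ : ZMod N) - lam) * heig + (c : ZMod N) * hmin
  refine ⟨⟨hb₁, hb₂⟩, ⟨by rw [Matrix.det_fin_two_of]; ring, by ring⟩, fun hdet => ?_⟩
  refine span_pair_eq_decompLattice2 hN.ne' hb₁ hb₂ ?_
  simp only [Matrix.cons_val_zero, Matrix.cons_val_one]
  linear_combination -hdet
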